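/- arXiv:1206.5106 — 9 statements merged into one kernel-verified Lean document; each statement's English description precedes it below -/
import Mathlib

section
/- Let G be a connected graph whose complement is a comparability graph, let E⃗ be a transitive orientation of the complement of G, let v0 be a sink of this orientation, and let L_0, ..., L_z be the distance layers of G from v0. Then for every pair of indices 0 ≤ i < j ≤ z, every oriented non-edge of G (edge of the complement) between a vertex of L_i and a vertex of L_j is oriented toward L_i. -/
private lemma step_down {V : Type*} (G : SimpleGraph V) (hconn : G.Connected)
    (v0 u : V) (i : ℕ) (h : G.dist v0 u = i + 1) :
    ∃ w, G.Adj w u ∧ G.dist v0 w = i := by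
  obtain ⟨p, hp⟩ := hconn.exists_walk_length_eq_dist v0 u
  rw [h] at hp
  cases hrev : p.reverse with
  | nil =>
      have := congrArg SimpleGraph.Walk.length hrev
      simp [hp] at this
  | cons hadj q =>
      rename_i w
      refine ⟨w, hadj.symm, ?_⟩
      have hlen : q.length = i := by
        have := congrArg SimpleGraph.Walk.length hrev
        simp [hp] at this
        omega
      have h1 : G.dist v0 w ≤ i := by
        have := SimpleGraph.dist_le q.reverse
        simpa [hlen] using this
      have h2 : G.dist v0 u ≤ G.dist v0 w + 1 := by
        calc G.dist v0 u ≤ G.dist v0 w + G.dist w u := hconn.dist_triangle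
        _ ≤ G.dist v0 w + 1 := by
            have : G.dist w u ≤ 1 := by
              simpa using (SimpleGraph.dist_eq_one_iff_adj.mpr hadj.symm).le
            omega
      omega

/-- Let `G` be connected, `E` a transitive orientation of the complement of `G`
with sink `v0`, and take distance layers of `G` from `v0`. Then every oriented
non-edge of `G` between a vertex of `L_i` and a vertex of `L_j` with `i < j`
is oriented toward `L_i`. -/
theorem stmt_3 {V : Type*} (G : SimpleGraph V) (hconn : G.Connected)
    (E : V → V → Prop)
    (horient : ∀ u v, Gᶜ.Adj u v ↔ (E u v ∨ E v u))
    (hasymm : ∀ u v, E u v → ¬ E v u)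
    (htrans : ∀ u v w, E u v → E v w → E u w)
    (v0 : V) (hsink : ∀ u, ¬ E v0 u) :
    ∀ (i j : ℕ) (u v : V), i < j → G.dist v0 u = i → G.dist v0 v = j →
      Gᶜ.Adj u v → E v u := by
  have key : ∀ (i : ℕ) (j : ℕ) (u v : V), i < j → G.dist v0 u = i →
      G.dist v0 v = j → ¬ E u v := by
    intro i
    induction i with
    | zero =>
        intro j u v hij hu hv hE
        have : u = v0 := (hconn.dist_eq_zero_iff.mp hu).symm
        exact hsink v (this ▸ hE)
    | succ n ih =>
        intro j u v hij hu hv hE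
        obtain ⟨w, hadj, hw⟩ := step_down G hconn v0 u n hu
        have hwv : ¬ G.Adj w v := by
          intro h
          have : G.dist v0 v ≤ G.dist v0 w + 1 := by
            calc G.dist v0 v ≤ G.dist v0 w + G.dist w v := hconn.dist_triangle
            _ ≤ G.dist v0 w + 1 := by
                have := (SimpleGraph.dist_eq_one_iff_adj.mpr h).le
                omega
          omega
        have hne : w ≠ v := by
          intro h; subst h; omega
        have hcadj : Gᶜ.Adj w v := ⟨hne, hwv⟩
        rcases (horient w v).mp hcadj with h1 | h1
        · exact ih j w v (by omega) hw hv h1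
        · -- E v w, E u v gives E u w, but G.Adj w u means no complement edge
          have huw : E u w := htrans u v w hE h1
          have : Gᶜ.Adj u w := (horient u w).mpr (Or.inl huw)
          exact this.2 hadj.symm
  intro i j u v hij hu hv hadj
  rcases (horient u v).mp hadj with h | h
  · exact absurd h (key i j u v hij hu hv)
  · exact h
end

section
/- Every connected interval graph has a multi-chain ordering. Specifically, if v0 is the vertex whose interval has the leftmost left endpoint (with all endpoints distinct), then the distance layers from v0 form a multi-chain ordering. -/
/-- Along any walk from `a` to `y`, if a point `x` lies between `l a` and `l y`,
then some vertex of the walk's support covers `x`. -/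
lemma interval_walk_cover {V : Type*} {G : SimpleGraph V} (l r : V → ℝ)
    (hlr : ∀ v, l v ≤ r v)
    (hadj : ∀ u v, G.Adj u v → l v ≤ r u) (x : ℝ) :
    ∀ {a y : V} (p : G.Walk a y), l a ≤ x → x ≤ l y →
      ∃ w ∈ p.support, l w ≤ x ∧ x ≤ r w := by
  intro a y p
  induction p with
  | nil =>
    intro h1 h2
    exact ⟨_, by simp, h1, h2.trans (hlr _)⟩
  | @cons a b y h p ih =>
    intro h1 h2
    by_cases hx : x ≤ r a
    · exact ⟨a, by simp, h1, hx⟩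
    · push_neg at hx
      obtain ⟨w, hw, hws⟩ := ih (le_of_lt (lt_of_le_of_lt (hadj a b h) hx)) h2
      exact ⟨w, by simp [hw], hws⟩

/-- If the interval of `x` lies entirely to the left of the interval of `y`,
then `x` is at distance at most `dist v0 y` from the leftmost vertex `v0`. -/
lemma left_of_dist_le {V : Type*} {G : SimpleGraph V} (hconn : G.Connected)
    (l r : V → ℝ) (hlr : ∀ v, l v < r v)
    (hadj : ∀ u v, G.Adj u v ↔ (u ≠ v ∧ l u ≤ r v ∧ l v ≤ r u))
    (v0 : V) (hv0 : ∀ u, u ≠ v0 → l v0 < l u)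
    {x y : V} (hxy : r x < l y) :
    G.dist v0 x ≤ G.dist v0 y := by
  classical
  by_cases hx0 : x = v0
  · rw [hx0, SimpleGraph.dist_self]; exact Nat.zero_le _
  have hl0x : l v0 < l x := hv0 x hx0
  obtain ⟨p, hp⟩ := hconn.exists_walk_length_eq_dist v0 y
  obtain ⟨w, hw, hw1, hw2⟩ :=
    interval_walk_cover l r (fun v => (hlr v).le)
      (fun u v huv => ((hadj u v).mp huv).2.2) (l x) p hl0x.le
      (le_of_lt (lt_of_le_of_lt (hlr x).le hxy))
  have hwy : w ≠ y := by
    intro h; subst h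
    exact absurd (lt_of_le_of_lt hw1 (lt_of_le_of_lt (hlr x).le hxy)) (lt_irrefl _)
  have hsplit := p.take_spec hw
  have hlen : (p.takeUntil w hw).length + (p.dropUntil w hw).length = p.length := by
    conv_rhs => rw [← hsplit]
    rw [SimpleGraph.Walk.length_append]
  have hdrop : 1 ≤ (p.dropUntil w hw).length := by
    rcases Nat.eq_zero_or_pos (p.dropUntil w hw).length with h0 | h0
    · exact absurd ((p.dropUntil w hw).eq_of_length_eq_zero h0) hwy
    · exact h0
  by_cases hwx : w = x
  · subst hwx
    calc G.dist v0 w ≤ (p.takeUntil w hw).length := SimpleGraph.dist_le _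
    _ ≤ p.length := by omega
    _ = G.dist v0 y := hp
  · have hadjwx : G.Adj w x := by
      rw [hadj]
      exact ⟨hwx, hw1.trans (hlr x).le, hw2⟩
    calc G.dist v0 x ≤ ((p.takeUntil w hw).concat hadjwx).length := SimpleGraph.dist_le _
    _ = (p.takeUntil w hw).length + 1 := SimpleGraph.Walk.length_concat _ _
    _ ≤ p.length := by omega
    _ = G.dist v0 y := hp

/-- Every connected interval graph admits a multi-chain ordering: starting from
the vertex `v0` whose interval has the leftmost left endpoint (all endpoints
distinct), the distance layers form a multi-chain ordering. -/
theorem stmt_6 {V : Type*} (G : SimpleGraph V) (hconn : G.Connected)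
    (l r : V → ℝ) (hlr : ∀ v, l v < r v)
    (hadj : ∀ u v, G.Adj u v ↔ (u ≠ v ∧ l u ≤ r v ∧ l v ≤ r u))
    (hlinj : Function.Injective l) (hrinj : Function.Injective r)
    (hlr_ne : ∀ u v, l u ≠ r v)
    (v0 : V) (hv0 : ∀ u, u ≠ v0 → l v0 < l u) :
    ∀ i : ℕ, ¬ ∃ u u' v v' : V,
      G.dist v0 u = i ∧ G.dist v0 u' = i ∧
      G.dist v0 v = i + 1 ∧ G.dist v0 v' = i + 1 ∧
      G.Adj u v ∧ G.Adj u' v' ∧ ¬ G.Adj u v' ∧ ¬ G.Adj u' v := by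
  intro i
  rintro ⟨u, u', v, v', hu, hu', hv, hv', huv, hu'v', hnuv', hnu'v⟩
  have hu'ne : u' ≠ v := by intro h; rw [h, hv] at hu'; omega
  have hune : u ≠ v' := by intro h; rw [h, hv'] at hu; omega
  -- from ¬ Adj u' v : intervals of u' and v are disjoint
  have h1 : r v < l u' ∨ r u' < l v := by
    rw [hadj] at hnu'v
    push_neg at hnu'v
    have h := hnu'v hu'ne
    rcases le_or_gt (l u') (r v) with hle | hlt
    · exact Or.inr (h hle)
    · exact Or.inl hlt
  rcases h1 with h1 | h1
  · have := left_of_dist_le hconn l r hlr hadj v0 hv0 h1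
    rw [hv, hu'] at this; omega
  · -- r u' < l v; now analyze ¬ Adj u v'
    have h2 : r v' < l u ∨ r u < l v' := by
      rw [hadj] at hnuv'
      push_neg at hnuv'
      have h := hnuv' hune
      rcases le_or_gt (l u) (r v') with hle | hlt
      · exact Or.inr (h hle)
      · exact Or.inl hlt
    rcases h2 with h2 | h2
    · have := left_of_dist_le hconn l r hlr hadj v0 hv0 h2
      rw [hv', hu] at this; omega
    · -- r u' < l v ≤ r u < l v' ≤ r u' : contradiction
      have e1 : l v ≤ r u := ((hadj u v).mp huv).2.2
      have e2 : l v' ≤ r u' := ((hadj u' v').mp hu'v').2.2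
      linarith
end

section
/- In an interval representation of a connected interval graph with all endpoints distinct, let v0 be the interval with leftmost left endpoint, and let u, v be two vertices in the same distance layer L_i from v0 such that the left endpoint of u's interval lies to the left of the left endpoint of v's interval. Then every vertex of layer L_{i-1} adjacent to v is also adjacent to u. -/
/-- A vertex at distance `n+1` has a neighbour at distance `n`. -/
lemma aux_exists_adj_dist {V : Type*} (G : SimpleGraph V) (hconn : G.Connected)
    (v0 b : V) (n : ℕ) (hb : G.dist v0 b = n + 1) :
    ∃ c, G.Adj c b ∧ G.dist v0 c = n := by
  obtain ⟨p, hp⟩ := hconn.exists_walk_length_eq_dist v0 b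
  rw [hb] at hp
  cases hrev : p.reverse with
  | nil =>
    have : p.length = 0 := by
      have := congrArg SimpleGraph.Walk.length hrev
      simpa using this
    omega
  | cons h q =>
    rename_i c
    refine ⟨c, h.symm, ?_⟩
    have hlen : q.length = n := by
      have := congrArg SimpleGraph.Walk.length hrev
      simp [hp] at this
      omega
    have h1 : G.dist v0 c ≤ n := by
      have := SimpleGraph.dist_le q.reverse
      simpa [hlen] using this
    have h2 : G.dist v0 b ≤ G.dist v0 c + 1 := by
      calc G.dist v0 b ≤ G.dist v0 c + G.dist c b := hconn.dist_triangle
        _ ≤ G.dist v0 c + 1 := by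
            have : G.dist c b ≤ 1 := by
              rw [SimpleGraph.dist_eq_one_iff_adj.mpr h.symm]
            omega
    omega

/-- Monotonicity: smaller left endpoint gives smaller-or-equal distance from `v0`. -/
lemma aux_mono {V : Type*} (G : SimpleGraph V) (hconn : G.Connected)
    (l r : V → ℝ) (hlr : ∀ v, l v < r v)
    (hadj : ∀ u v, G.Adj u v ↔ (u ≠ v ∧ l u ≤ r v ∧ l v ≤ r u))
    (v0 : V) (hv0 : ∀ u, u ≠ v0 → l v0 < l u) :
    ∀ n : ℕ, ∀ b a : V, G.dist v0 b = n → l a ≤ l b → G.dist v0 a ≤ n := by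
  intro n
  induction n with
  | zero =>
    intro b a hb hab
    obtain rfl : v0 = b := (hconn.dist_eq_zero_iff).mp hb
    by_cases hav : a = v0
    · simp [hav]
    · exact absurd hab (not_le.mpr (hv0 a hav))
  | succ n ih =>
    intro b a hb hab
    obtain ⟨c, hcb, hc⟩ := aux_exists_adj_dist G hconn v0 b n hb
    by_cases hac : l a ≤ l c
    · have := ih c a hc hac
      omega
    · push_neg at hac
      by_cases hacv : a = c
      · subst hacv; omega
      · have hbr : l b ≤ r c := ((hadj c b).mp hcb).2.2
        have : G.Adj c a := by
          rw [hadj]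
          exact ⟨fun h => hacv h.symm, le_of_lt (hac.trans (hlr a)), le_trans hab hbr⟩
        have h2 : G.dist v0 a ≤ G.dist v0 c + 1 := by
          calc G.dist v0 a ≤ G.dist v0 c + G.dist c a := hconn.dist_triangle
            _ ≤ G.dist v0 c + 1 := by
                rw [SimpleGraph.dist_eq_one_iff_adj.mpr this]
        omega

/-- In an interval representation of a connected interval graph with distinct
endpoints, let `v0` have the leftmost left endpoint, and let `u, v` be in the
same distance layer `L_i` with the left endpoint of `u` to the left of that of
`v`. Then every vertex of `L_{i-1}` adjacent to `v` is also adjacent to `u`. -/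
theorem stmt_7 {V : Type*} (G : SimpleGraph V) (hconn : G.Connected)
    (l r : V → ℝ) (hlr : ∀ v, l v < r v)
    (hadj : ∀ u v, G.Adj u v ↔ (u ≠ v ∧ l u ≤ r v ∧ l v ≤ r u))
    (hlinj : Function.Injective l) (hrinj : Function.Injective r)
    (hlr_ne : ∀ u v, l u ≠ r v)
    (v0 : V) (hv0 : ∀ u, u ≠ v0 → l v0 < l u)
    (i : ℕ) (hi : 1 ≤ i) (u v w : V)
    (hu : G.dist v0 u = i) (hv : G.dist v0 v = i) (hw : G.dist v0 w = i - 1)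
    (hlt : l u < l v) (hwv : G.Adj w v) :
    G.Adj w u := by
  have hwu : l w < l u := by
    by_contra h
    push_neg at h
    have := aux_mono G hconn l r hlr hadj v0 hv0 (i - 1) w u hw h
    omega
  have hvw : l v ≤ r w := ((hadj w v).mp hwv).2.2
  rw [hadj]
  refine ⟨fun h => hwu.ne (congrArg l h), ?_, ?_⟩
  · exact le_of_lt (hwu.trans (hlr u))
  · exact le_of_lt (hlt.trans_le hvw)
end

section
/- The tree T obtained from the star K_{1,3} by subdividing each edge once has no multi-chain ordering: for every choice of starting vertex v0, some pair of consecutive distance layers induces a bipartite graph containing an induced 2K2. -/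
lemma walk_bound {V : Type*} {G : SimpleGraph V} (f : V → ℤ)
    (hf : ∀ u v, G.Adj u v → |f u - f v| ≤ 1) :
    ∀ {a b : V} (p : G.Walk a b), |f a - f b| ≤ (p.length : ℤ) := by
  intro a b p
  induction p with
  | nil => simp
  | @cons u v w h p ih =>
    have h1 := hf _ _ h
    have h2 := abs_sub_le (f u) (f v) (f w)
    rw [SimpleGraph.Walk.length_cons]
    push_cast
    linarith

lemma dist_eq_of_walk {V : Type*} {G : SimpleGraph V} (f : V → ℤ)
    (hf : ∀ u v, G.Adj u v → |f u - f v| ≤ 1) {a b : V} (p : G.Walk a b) (n : ℕ)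
    (hl : p.length = n) (hn : |f a - f b| = (n : ℤ)) : G.dist a b = n := by
  refine le_antisymm (hl ▸ SimpleGraph.dist_le p) ?_
  obtain ⟨q, hq⟩ := SimpleGraph.Reachable.exists_walk_length_eq_dist ⟨p⟩
  have := walk_bound f hf q
  rw [hq, hn] at this
  exact_mod_cast this

/-- The tree `T` obtained from `K_{1,3}` by subdividing each edge once (the
spider with center `0`, middle vertices `1,2,3`, leaves `4,5,6`) has no
multi-chain ordering: from every start vertex some pair of consecutive distance
layers contains an induced `2K₂`. -/
theorem stmt_9 (T : SimpleGraph (Fin 7))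
    (hadj : ∀ u v, T.Adj u v ↔
      ((u, v) ∈ ([(0,1),(0,2),(0,3),(1,4),(2,5),(3,6)] : List (Fin 7 × Fin 7)) ∨
       (v, u) ∈ ([(0,1),(0,2),(0,3),(1,4),(2,5),(3,6)] : List (Fin 7 × Fin 7)))) :
    ∀ v0 : Fin 7, ∃ i : ℕ, ∃ u u' v v' : Fin 7,
      T.dist v0 u = i ∧ T.dist v0 u' = i ∧
      T.dist v0 v = i + 1 ∧ T.dist v0 v' = i + 1 ∧
      T.Adj u v ∧ T.Adj u' v' ∧ ¬ T.Adj u v' ∧ ¬ T.Adj u' v := by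
  have a01 : T.Adj 0 1 := (hadj 0 1).mpr (by decide)
  have a10 : T.Adj 1 0 := (hadj 1 0).mpr (by decide)
  have a02 : T.Adj 0 2 := (hadj 0 2).mpr (by decide)
  have a20 : T.Adj 2 0 := (hadj 2 0).mpr (by decide)
  have a03 : T.Adj 0 3 := (hadj 0 3).mpr (by decide)
  have a30 : T.Adj 3 0 := (hadj 3 0).mpr (by decide)
  have a14 : T.Adj 1 4 := (hadj 1 4).mpr (by decide)
  have a41 : T.Adj 4 1 := (hadj 4 1).mpr (by decide)
  have a25 : T.Adj 2 5 := (hadj 2 5).mpr (by decide)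
  have a52 : T.Adj 5 2 := (hadj 5 2).mpr (by decide)
  have a36 : T.Adj 3 6 := (hadj 3 6).mpr (by decide)
  have a63 : T.Adj 6 3 := (hadj 6 3).mpr (by decide)
  have n15 : ¬ T.Adj 1 5 := by rw [hadj]; decide
  have n24 : ¬ T.Adj 2 4 := by rw [hadj]; decide
  have n26 : ¬ T.Adj 2 6 := by rw [hadj]; decide
  have n35 : ¬ T.Adj 3 5 := by rw [hadj]; decide
  have n16 : ¬ T.Adj 1 6 := by rw [hadj]; decide
  have n34 : ¬ T.Adj 3 4 := by rw [hadj]; decide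
  intro v0
  fin_cases v0
  · -- v0 = 0
    have hf : ∀ u v, T.Adj u v → |(![0,1,1,1,2,2,2] : Fin 7 → ℤ) u - ![0,1,1,1,2,2,2] v| ≤ 1 := by
      simp only [hadj]; decide
    refine ⟨1, 1, 2, 4, 5, ?_, ?_, ?_, ?_, a14, a25, n15, n24⟩
    · exact dist_eq_of_walk _ hf (.cons a01 .nil) 1 rfl (by decide)
    · exact dist_eq_of_walk _ hf (.cons a02 .nil) 1 rfl (by decide)
    · exact dist_eq_of_walk _ hf (.cons a01 (.cons a14 .nil)) 2 rfl (by decide)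
    · exact dist_eq_of_walk _ hf (.cons a02 (.cons a25 .nil)) 2 rfl (by decide)
  · -- v0 = 1
    have hf : ∀ u v, T.Adj u v → |(![1,0,2,2,1,3,3] : Fin 7 → ℤ) u - ![1,0,2,2,1,3,3] v| ≤ 1 := by
      simp only [hadj]; decide
    refine ⟨2, 2, 3, 5, 6, ?_, ?_, ?_, ?_, a25, a36, n26, n35⟩
    · exact dist_eq_of_walk _ hf (.cons a10 (.cons a02 .nil)) 2 rfl (by decide)
    · exact dist_eq_of_walk _ hf (.cons a10 (.cons a03 .nil)) 2 rfl (by decide)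
    · exact dist_eq_of_walk _ hf (.cons a10 (.cons a02 (.cons a25 .nil))) 3 rfl (by decide)
    · exact dist_eq_of_walk _ hf (.cons a10 (.cons a03 (.cons a36 .nil))) 3 rfl (by decide)
  · -- v0 = 2
    have hf : ∀ u v, T.Adj u v → |(![1,2,0,2,3,1,3] : Fin 7 → ℤ) u - ![1,2,0,2,3,1,3] v| ≤ 1 := by
      simp only [hadj]; decide
    refine ⟨2, 1, 3, 4, 6, ?_, ?_, ?_, ?_, a14, a36, n16, n34⟩
    · exact dist_eq_of_walk _ hf (.cons a20 (.cons a01 .nil)) 2 rfl (by decide)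
    · exact dist_eq_of_walk _ hf (.cons a20 (.cons a03 .nil)) 2 rfl (by decide)
    · exact dist_eq_of_walk _ hf (.cons a20 (.cons a01 (.cons a14 .nil))) 3 rfl (by decide)
    · exact dist_eq_of_walk _ hf (.cons a20 (.cons a03 (.cons a36 .nil))) 3 rfl (by decide)
  · -- v0 = 3
    have hf : ∀ u v, T.Adj u v → |(![1,2,2,0,3,3,1] : Fin 7 → ℤ) u - ![1,2,2,0,3,3,1] v| ≤ 1 := by
      simp only [hadj]; decide
    refine ⟨2, 1, 2, 4, 5, ?_, ?_, ?_, ?_, a14, a25, n15, n24⟩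
    · exact dist_eq_of_walk _ hf (.cons a30 (.cons a01 .nil)) 2 rfl (by decide)
    · exact dist_eq_of_walk _ hf (.cons a30 (.cons a02 .nil)) 2 rfl (by decide)
    · exact dist_eq_of_walk _ hf (.cons a30 (.cons a01 (.cons a14 .nil))) 3 rfl (by decide)
    · exact dist_eq_of_walk _ hf (.cons a30 (.cons a02 (.cons a25 .nil))) 3 rfl (by decide)
  · -- v0 = 4
    have hf : ∀ u v, T.Adj u v → |(![2,1,3,3,0,4,4] : Fin 7 → ℤ) u - ![2,1,3,3,0,4,4] v| ≤ 1 := by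
      simp only [hadj]; decide
    refine ⟨3, 2, 3, 5, 6, ?_, ?_, ?_, ?_, a25, a36, n26, n35⟩
    · exact dist_eq_of_walk _ hf (.cons a41 (.cons a10 (.cons a02 .nil))) 3 rfl (by decide)
    · exact dist_eq_of_walk _ hf (.cons a41 (.cons a10 (.cons a03 .nil))) 3 rfl (by decide)
    · exact dist_eq_of_walk _ hf (.cons a41 (.cons a10 (.cons a02 (.cons a25 .nil)))) 4 rfl (by decide)
    · exact dist_eq_of_walk _ hf (.cons a41 (.cons a10 (.cons a03 (.cons a36 .nil)))) 4 rfl (by decide)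
  · -- v0 = 5
    have hf : ∀ u v, T.Adj u v → |(![2,3,1,3,4,0,4] : Fin 7 → ℤ) u - ![2,3,1,3,4,0,4] v| ≤ 1 := by
      simp only [hadj]; decide
    refine ⟨3, 1, 3, 4, 6, ?_, ?_, ?_, ?_, a14, a36, n16, n34⟩
    · exact dist_eq_of_walk _ hf (.cons a52 (.cons a20 (.cons a01 .nil))) 3 rfl (by decide)
    · exact dist_eq_of_walk _ hf (.cons a52 (.cons a20 (.cons a03 .nil))) 3 rfl (by decide)
    · exact dist_eq_of_walk _ hf (.cons a52 (.cons a20 (.cons a01 (.cons a14 .nil)))) 4 rfl (by decide)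
    · exact dist_eq_of_walk _ hf (.cons a52 (.cons a20 (.cons a03 (.cons a36 .nil)))) 4 rfl (by decide)
  · -- v0 = 6
    have hf : ∀ u v, T.Adj u v → |(![2,3,3,1,4,4,0] : Fin 7 → ℤ) u - ![2,3,3,1,4,4,0] v| ≤ 1 := by
      simp only [hadj]; decide
    refine ⟨3, 1, 2, 4, 5, ?_, ?_, ?_, ?_, a14, a25, n15, n24⟩
    · exact dist_eq_of_walk _ hf (.cons a63 (.cons a30 (.cons a01 .nil))) 3 rfl (by decide)
    · exact dist_eq_of_walk _ hf (.cons a63 (.cons a30 (.cons a02 .nil))) 3 rfl (by decide)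
    · exact dist_eq_of_walk _ hf (.cons a63 (.cons a30 (.cons a01 (.cons a14 .nil)))) 4 rfl (by decide)
    · exact dist_eq_of_walk _ hf (.cons a63 (.cons a30 (.cons a02 (.cons a25 .nil)))) 4 rfl (by decide)
end

section
/- If every connected induced subgraph of a graph G admits a multi-chain ordering, then G is weakly chordal: G contains no induced cycle C_n and no induced complement of C_n for any n > 4. -/
/-!
An induced `C_n` or `C_nᶜ` with `n ≥ 5` would be a connected induced subgraph of `G`, so it
suffices that neither graph has a multi-chain ordering (a property invariant under
isomorphism). On `ZMod n` the cycle distance from `u` to `v` is `|valMinAbs (v - u)|`, so the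
layers around any root `a` are `{a ± k}`. Writing `n = 2j + 3` or `n = 2j + 4`, the two arcs
`a + j — a + (j + 1)` and `a - j — a - (j + 1)` form an induced `2K₂` between layers `j` and
`j + 1` of `C_n`. In `C_nᶜ` the layers `1` and `2` contain `a ± 2` and `a ± 1`, and the edges
`a - 2 — a + 1`, `a + 2 — a - 1` form an induced `2K₂`.
-/

namespace ZMod

lemma natAbs_valMinAbs_intCast {n : ℕ} {m : ℤ} (hm : m.natAbs < n) :
    (m : ZMod n).valMinAbs.natAbs = min m.natAbs (n - m.natAbs) := by
  have : NeZero n := ⟨by omega⟩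
  obtain ⟨k, rfl | rfl⟩ := Int.eq_nat_or_neg m <;>
    simp only [Int.natAbs_neg, Int.natAbs_natCast, Int.cast_neg, Int.cast_natCast,
      natAbs_valMinAbs_neg] at hm ⊢ <;>
    rw [valMinAbs_natAbs_eq_min, val_cast_of_lt hm]

lemma natAbs_valMinAbs_one_le (n : ℕ) : (1 : ZMod n).valMinAbs.natAbs ≤ 1 := by
  rcases n with _ | _ | n
  · rfl
  · simp [Subsingleton.elim (1 : ZMod 1) 0]
  · simpa using (natAbs_valMinAbs_intCast (n := n + 2) (m := 1) (by omega)).le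

end ZMod

namespace SimpleGraph

local notation "𝒞" n:max => circulantGraph ({1} : Set (ZMod n))

variable {α β V : Type*} {G : SimpleGraph V} {H : SimpleGraph α} {H' : SimpleGraph β}

def HasMultiChainOrdering (H : SimpleGraph α) : Prop :=
  ∃ v₀ : α, ∀ i : ℕ, ¬ ∃ u u' v v' : α,
    H.dist v₀ u = i ∧ H.dist v₀ u' = i ∧ H.dist v₀ v = i + 1 ∧ H.dist v₀ v' = i + 1 ∧
    H.Adj u v ∧ H.Adj u' v' ∧ ¬ H.Adj u v' ∧ ¬ H.Adj u' v

lemma Hom.dist_le_of_reachable (f : H →g H') {u v : α} (h : H.Reachable u v) :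
    H'.dist (f u) (f v) ≤ H.dist u v := by
  obtain ⟨p, hp⟩ := h.exists_walk_length_eq_dist
  simpa [hp] using dist_le (p.map f)

lemma Iso.dist_eq (e : H ≃g H') (u v : α) : H'.dist (e u) (e v) = H.dist u v := by
  by_cases h : H.Reachable u v
  · refine le_antisymm (e.toHom.dist_le_of_reachable h) ?_
    simpa using e.symm.toHom.dist_le_of_reachable (h.map e.toHom)
  · rw [dist_eq_zero_of_not_reachable h, dist_eq_zero_of_not_reachable (mt Iso.reachable_iff.mp h)]

lemma HasMultiChainOrdering.of_iso (e : H ≃g H') (h : H.HasMultiChainOrdering) :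
    H'.HasMultiChainOrdering := by
  obtain ⟨v₀, hv₀⟩ := h
  refine ⟨e v₀, fun i ⟨u, u', v, v', hw⟩ => hv₀ i ⟨e.symm u, e.symm u', e.symm v, e.symm v', ?_⟩⟩
  simpa only [← e.dist_eq, e.apply_symm_apply, e.symm.map_adj_iff] using hw

theorem IsIndContained.hasMultiChainOrdering
    (hG : ∀ s : Set V, (G.induce s).Connected → (G.induce s).HasMultiChainOrdering)
    (hH : H.Connected) (h : H ⊴ G) : H.HasMultiChainOrdering := by
  obtain ⟨f⟩ := h
  have e := f.isoInduceRange
  exact (hG _ (e.connected_iff.mp hH)).of_iso e.symm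

lemma dist_eq_two_of_adj_of_adj {u v w : V} (huw : G.Adj u w) (hwv : G.Adj w v)
    (huv : Gᶜ.Adj u v) : G.dist u v = 2 := by
  rw [dist, edist_eq_two_iff.mpr ⟨huv.1, huv.2, w, huw, hwv.symm⟩]
  rfl

section Cycle

variable {n : ℕ}

lemma Walk.natAbs_valMinAbs_sub_le_length {u v : ZMod n} (p : (𝒞 n).Walk u v) :
    (v - u).valMinAbs.natAbs ≤ p.length := by
  induction p with
  | nil => simp
  | @cons u w v huw p ih =>
    have hstep : (w - u).valMinAbs.natAbs ≤ 1 := by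
      rcases huw.2 with h | h
      · rw [← neg_sub, ZMod.natAbs_valMinAbs_neg, Set.mem_singleton_iff.mp h]
        exact ZMod.natAbs_valMinAbs_one_le n
      · rw [Set.mem_singleton_iff.mp h]
        exact ZMod.natAbs_valMinAbs_one_le n
    calc (v - u).valMinAbs.natAbs = ((v - w) + (w - u)).valMinAbs.natAbs := by
          rw [sub_add_sub_cancel]
      _ ≤ ((v - w).valMinAbs + (w - u).valMinAbs).natAbs := ZMod.natAbs_valMinAbs_add_le _ _
      _ ≤ (v - w).valMinAbs.natAbs + (w - u).valMinAbs.natAbs := Int.natAbs_add_le _ _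
      _ ≤ (Walk.cons huw p).length := by rw [Walk.length_cons]; omega

variable [Nontrivial (ZMod n)]

lemma circulantGraph_one_exists_walk_add_natCast (u : ZMod n) (k : ℕ) :
    ∃ p : (𝒞 n).Walk u (u + k), p.length = k := by
  induction k with
  | zero => exact ⟨Walk.nil.copy rfl (by simp), by simp⟩
  | succ k ih =>
    obtain ⟨p, hp⟩ := ih
    have hadj : (𝒞 n).Adj (u + k) (u + (k + 1 : ℕ)) := by
      rw [circulantGraph_adj]
      push_cast
      simp
    exact ⟨p.concat hadj, by rw [Walk.length_concat, hp]⟩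

lemma circulantGraph_one_exists_walk_length_eq (u v : ZMod n) :
    ∃ p : (𝒞 n).Walk u v, p.length = (v - u).valMinAbs.natAbs := by
  have hv : v = u + ((v - u).valMinAbs : ZMod n) := by rw [ZMod.coe_valMinAbs]; abel
  obtain ⟨k, hk | hk⟩ := Int.eq_nat_or_neg (v - u).valMinAbs <;> rw [hk] at hv ⊢
  · obtain ⟨p, hp⟩ := circulantGraph_one_exists_walk_add_natCast u k
    exact ⟨p.copy rfl (by simpa using hv.symm), by simpa using hp⟩
  · obtain ⟨p, hp⟩ := circulantGraph_one_exists_walk_add_natCast v k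
    exact ⟨p.reverse.copy (by rw [hv]; push_cast; abel) rfl, by simpa using hp⟩

lemma dist_circulantGraph_one (u v : ZMod n) :
    (𝒞 n).dist u v = (v - u).valMinAbs.natAbs := by
  obtain ⟨p, hp⟩ := circulantGraph_one_exists_walk_length_eq u v
  refine le_antisymm (hp ▸ dist_le p) ?_
  obtain ⟨q, hq⟩ := p.reachable.exists_walk_length_eq_dist
  exact hq ▸ q.natAbs_valMinAbs_sub_le_length

lemma circulantGraph_one_connected : (𝒞 n).Connected :=
  ⟨fun u v => (circulantGraph_one_exists_walk_length_eq u v).elim fun p _ => ⟨p⟩⟩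

lemma dist_circulantGraph_one_of_sub_eq_intCast {u v : ZMod n} {d : ℤ} (h : v - u = d)
    (hd : d.natAbs < n) :
    (𝒞 n).dist u v = min d.natAbs (n - d.natAbs) := by
  rw [dist_circulantGraph_one, h, ZMod.natAbs_valMinAbs_intCast hd]

lemma circulantGraph_one_adj_iff_of_sub_eq_intCast {u v : ZMod n} {d : ℤ} (h : v - u = d)
    (hd : d.natAbs < n) :
    (𝒞 n).Adj u v ↔ min d.natAbs (n - d.natAbs) = 1 := by
  rw [← dist_eq_one_iff_adj, dist_circulantGraph_one_of_sub_eq_intCast h hd]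

lemma compl_circulantGraph_one_adj_iff (u v : ZMod n) :
    (𝒞 n)ᶜ.Adj u v ↔ 1 < (v - u).valMinAbs.natAbs := by
  have hne : u ≠ v ↔ (v - u).valMinAbs.natAbs ≠ 0 := by
    rw [Ne, Ne, Int.natAbs_eq_zero, ZMod.valMinAbs_eq_zero, sub_eq_zero, eq_comm]
  rw [compl_adj, ← dist_eq_one_iff_adj, dist_circulantGraph_one, hne]
  omega

lemma compl_circulantGraph_one_adj_iff_of_sub_eq_intCast {u v : ZMod n} {d : ℤ}
    (h : v - u = d) (hd : d.natAbs < n) :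
    (𝒞 n)ᶜ.Adj u v ↔ 1 < min d.natAbs (n - d.natAbs) := by
  rw [compl_circulantGraph_one_adj_iff, h, ZMod.natAbs_valMinAbs_intCast hd]

end Cycle

section CycleComplement

variable {n : ℕ}

lemma dist_compl_circulantGraph_one_eq_two (hn : 4 < n) {u v : ZMod n} {d : ℤ}
    (h : v - u = d) (hd : d.natAbs = 1) : (𝒞 n)ᶜ.dist u v = 2 := by
  have : Nontrivial (ZMod n) := ZMod.nontrivial_iff.mpr (by omega)
  refine dist_eq_two_of_adj_of_adj (w := u + (3 * d : ℤ)) ?_ ?_ ?_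
  · rw [compl_circulantGraph_one_adj_iff_of_sub_eq_intCast (d := 3 * d) (by ring) (by omega)]
    omega
  · rw [compl_circulantGraph_one_adj_iff_of_sub_eq_intCast (d := -2 * d)
      (by push_cast; linear_combination h) (by omega)]
    omega
  · rw [compl_compl, circulantGraph_one_adj_iff_of_sub_eq_intCast h (by omega)]
    omega

lemma compl_circulantGraph_one_connected (hn : 4 < n) : (𝒞 n)ᶜ.Connected := by
  have : Nontrivial (ZMod n) := ZMod.nontrivial_iff.mpr (by omega)
  refine ⟨fun u v => ?_⟩
  have h : v - u = ((v - u).valMinAbs : ZMod n) := (ZMod.coe_valMinAbs _).symm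
  by_cases huv : u = v
  · rw [huv]
  by_cases hadj : (𝒞 n)ᶜ.Adj u v
  · exact hadj.reachable
  refine Reachable.of_dist_ne_zero (ne_of_eq_of_ne
    (dist_compl_circulantGraph_one_eq_two hn h ?_) two_ne_zero)
  rw [compl_adj, not_and, not_not, ← dist_eq_one_iff_adj, dist_circulantGraph_one] at hadj
  exact hadj huv

theorem not_hasMultiChainOrdering_circulantGraph_one (hn : 4 < n) :
    ¬ (𝒞 n).HasMultiChainOrdering := by
  have : Nontrivial (ZMod n) := ZMod.nontrivial_iff.mpr (by omega)
  rintro ⟨a, ha⟩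
  obtain ⟨j, hj⟩ : ∃ j : ℕ, 1 ≤ j ∧ (n = 2 * j + 3 ∨ n = 2 * j + 4) := ⟨(n - 3) / 2, by omega⟩
  refine ha j ⟨a + j, a - j, a + (j + 1 : ℕ), a - (j + 1 : ℕ), ?_, ?_, ?_, ?_, ?_, ?_, ?_, ?_⟩
  · rw [dist_circulantGraph_one_of_sub_eq_intCast (d := j) (by push_cast; ring) (by omega)]
    omega
  · rw [dist_circulantGraph_one_of_sub_eq_intCast (d := -j) (by push_cast; ring) (by omega)]
    omega
  · rw [dist_circulantGraph_one_of_sub_eq_intCast (d := j + 1) (by push_cast; ring) (by omega)]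
    omega
  · rw [dist_circulantGraph_one_of_sub_eq_intCast (d := -(j + 1)) (by push_cast; ring) (by omega)]
    omega
  · rw [circulantGraph_one_adj_iff_of_sub_eq_intCast (d := 1) (by push_cast; ring) (by omega)]
    omega
  · rw [circulantGraph_one_adj_iff_of_sub_eq_intCast (d := -1) (by push_cast; ring) (by omega)]
    omega
  · rw [circulantGraph_one_adj_iff_of_sub_eq_intCast (d := -(2 * j + 1)) (by push_cast; ring)
      (by omega)]
    omega
  · rw [circulantGraph_one_adj_iff_of_sub_eq_intCast (d := 2 * j + 1) (by push_cast; ring)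
      (by omega)]
    omega

theorem not_hasMultiChainOrdering_compl_circulantGraph_one (hn : 4 < n) :
    ¬ (𝒞 n)ᶜ.HasMultiChainOrdering := by
  have : Nontrivial (ZMod n) := ZMod.nontrivial_iff.mpr (by omega)
  rintro ⟨a, ha⟩
  refine ha 1 ⟨a - 2, a + 2, a + 1, a - 1, ?_, ?_, ?_, ?_, ?_, ?_, ?_, ?_⟩
  · rw [dist_eq_one_iff_adj,
      compl_circulantGraph_one_adj_iff_of_sub_eq_intCast (d := -2) (by push_cast; ring) (by omega)]
    omega
  · rw [dist_eq_one_iff_adj,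
      compl_circulantGraph_one_adj_iff_of_sub_eq_intCast (d := 2) (by push_cast; ring) (by omega)]
    omega
  · exact dist_compl_circulantGraph_one_eq_two (d := 1) hn (by push_cast; ring) rfl
  · exact dist_compl_circulantGraph_one_eq_two (d := -1) hn (by push_cast; ring) rfl
  · rw [compl_circulantGraph_one_adj_iff_of_sub_eq_intCast (d := 3) (by push_cast; ring)
      (by omega)]
    omega
  · rw [compl_circulantGraph_one_adj_iff_of_sub_eq_intCast (d := -3) (by push_cast; ring)
      (by omega)]
    omega
  · rw [compl_circulantGraph_one_adj_iff_of_sub_eq_intCast (d := 1) (by push_cast; ring)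
      (by omega)]
    omega
  · rw [compl_circulantGraph_one_adj_iff_of_sub_eq_intCast (d := -1) (by push_cast; ring)
      (by omega)]
    omega

end CycleComplement

end SimpleGraph

open SimpleGraph

/-- If every connected induced subgraph of `G` admits a multi-chain ordering,
then `G` is weakly chordal: it has no induced `C_n` nor induced complement of
`C_n` for any `n > 4`. -/
theorem stmt_10 {V : Type*} (G : SimpleGraph V)
    (h : ∀ s : Set V, (G.induce s).Connected →
      ∃ v0 : s, ∀ i : ℕ, ¬ ∃ u u' v v' : s,
        (G.induce s).dist v0 u = i ∧ (G.induce s).dist v0 u' = i ∧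
        (G.induce s).dist v0 v = i + 1 ∧ (G.induce s).dist v0 v' = i + 1 ∧
        (G.induce s).Adj u v ∧ (G.induce s).Adj u' v' ∧
        ¬ (G.induce s).Adj u v' ∧ ¬ (G.induce s).Adj u' v) :
    ∀ n : ℕ, 4 < n →
      (¬ ∃ f : ZMod n → V, Function.Injective f ∧
        ∀ u v, G.Adj (f u) (f v) ↔ (u ≠ v ∧ (u - v = 1 ∨ v - u = 1))) ∧
      (¬ ∃ f : ZMod n → V, Function.Injective f ∧
        ∀ u v, G.Adj (f u) (f v) ↔ (u ≠ v ∧ ¬ (u - v = 1 ∨ v - u = 1))) := by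
  intro n hn
  have not_embeds : ∀ H : SimpleGraph (ZMod n), H.Connected → ¬ H.HasMultiChainOrdering →
      ¬ ∃ f : ZMod n → V, Function.Injective f ∧ ∀ u v, G.Adj (f u) (f v) ↔ H.Adj u v :=
    fun H hH hHm ⟨f, hf, hadj⟩ =>
      hHm (IsIndContained.hasMultiChainOrdering h hH ⟨⟨⟨f, hf⟩, hadj _ _⟩⟩)
  have : Nontrivial (ZMod n) := ZMod.nontrivial_iff.mpr (by omega)
  refine ⟨not_embeds _ circulantGraph_one_connected
    (not_hasMultiChainOrdering_circulantGraph_one hn), fun ⟨f, hf, hadj⟩ => ?_⟩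
  refine not_embeds _ (compl_circulantGraph_one_connected hn)
    (not_hasMultiChainOrdering_compl_circulantGraph_one hn) ⟨f, hf, fun u v => ?_⟩
  rw [hadj, compl_adj, circulantGraph_adj]
  tauto
end

section
/- Let G be a connected graph with multi-chain ordering given by distance layers L_0, ..., L_z from v0, with each layer L_i ordered by non-increasing number of neighbours in L_{i-1}. Then for every vertex x in L_i with 0 ≤ i < z, the set of neighbours of x in L_{i+1} is exactly the first d_+(x) vertices of L_{i+1}, where d_+(x) is the number of neighbours of x in L_{i+1}. -/
open SimpleGraph

/-- A downward-closed subset of `Fin m` is an initial segment. -/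
lemma aux_initial_seg {m : ℕ} (S : Set (Fin m))
    (hdc : ∀ j ∈ S, ∀ k, k ≤ j → k ∈ S) :
    S = {j : Fin m | (j : ℕ) < S.ncard} := by
  ext j
  simp only [Set.mem_setOf_eq]
  constructor
  · intro hj
    have h1 : Set.Iic j ⊆ S := fun k hk => hdc j hj k hk
    have h2 := Set.ncard_le_ncard h1 (Set.toFinite S)
    have h3 : (Set.Iic j).ncard = (j : ℕ) + 1 := by
      rw [← Finset.coe_Iic, Set.ncard_coe_finset, Fin.card_Iic]
    omega
  · intro hj
    by_contra hjS
    have h2 : S ⊆ Set.Iio j := by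
      intro k hk
      by_contra hlt
      exact hjS (hdc k hk j (le_of_not_gt (fun h => hlt h)))
    have h3 := Set.ncard_le_ncard h2 (Set.toFinite _)
    have h4 : (Set.Iio j).ncard = (j : ℕ) := by
      rw [← Finset.coe_Iio, Set.ncard_coe_finset, Fin.card_Iio]
    omega

/-- Every vertex at distance `n+1` has a neighbour at distance `n`. -/
lemma aux_pred {V : Type*} (G : SimpleGraph V) (hconn : G.Connected)
    (v0 v : V) (n : ℕ) (hv : G.dist v0 v = n + 1) :
    ∃ u, G.Adj u v ∧ G.dist v0 u = n := by
  obtain ⟨p, hp⟩ := hconn.exists_walk_length_eq_dist v0 v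
  rw [hv] at hp
  cases p with
  | nil => simp at hp
  | cons h q =>
    obtain ⟨u, r, h', hc⟩ := SimpleGraph.Walk.exists_cons_eq_concat h q
    refine ⟨u, h', ?_⟩
    have hlen : r.length = n := by
      have := congrArg SimpleGraph.Walk.length hc
      simp [SimpleGraph.Walk.length_concat] at this
      simp at hp
      omega
    have h1 : G.dist v0 u ≤ n := hlen ▸ SimpleGraph.dist_le r
    have h2 : G.dist v0 v ≤ G.dist v0 u + G.dist u v :=
      hconn.dist_triangle
    have h3 : G.dist u v ≤ 1 := by
      rw [SimpleGraph.dist_eq_one_iff_adj.mpr h']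
    omega

/-- In a multi-chain ordering of a connected graph, with layer `L_{i+1}`
enumerated by non-increasing number of neighbours in `L_i`, the neighbours in
`L_{i+1}` of any vertex `x ∈ L_i` are exactly the first `d₊(x)` vertices of
`L_{i+1}`, where `d₊(x)` is the number of neighbours of `x` in `L_{i+1}`. -/
theorem stmt_11 {V : Type*} [Fintype V] (G : SimpleGraph V) (hconn : G.Connected)
    (v0 : V)
    (hmc : ∀ i : ℕ, ¬ ∃ u u' v v' : V,
      G.dist v0 u = i ∧ G.dist v0 u' = i ∧
      G.dist v0 v = i + 1 ∧ G.dist v0 v' = i + 1 ∧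
      G.Adj u v ∧ G.Adj u' v' ∧ ¬ G.Adj u v' ∧ ¬ G.Adj u' v)
    (i : ℕ) (m : ℕ) (o : Fin m → V) (hinj : Function.Injective o)
    (hrange : ∀ v : V, G.dist v0 v = i + 1 ↔ ∃ j, o j = v)
    (hmono : ∀ j k : Fin m, j ≤ k →
      (G.neighborSet (o k) ∩ {y | G.dist v0 y = i}).ncard ≤
      (G.neighborSet (o j) ∩ {y | G.dist v0 y = i}).ncard) :
    ∀ x : V, G.dist v0 x = i →
      G.neighborSet x ∩ {y | G.dist v0 y = i + 1} =
        o '' {j : Fin m |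
          (j : ℕ) < (G.neighborSet x ∩ {y | G.dist v0 y = i + 1}).ncard} := by
  intro x hx
  set N : Set V := G.neighborSet x ∩ {y | G.dist v0 y = i + 1} with hN
  set S : Set (Fin m) := {j | o j ∈ N} with hS
  have hLj : ∀ j : Fin m, G.dist v0 (o j) = i + 1 := fun j =>
    (hrange (o j)).mpr ⟨j, rfl⟩
  -- S is downward closed
  have hdc : ∀ j ∈ S, ∀ k, k ≤ j → k ∈ S := by
    intro j hj k hkj
    by_contra hk
    have hxj : G.Adj x (o j) := hj.1
    have hxk : ¬ G.Adj x (o k) := fun h => hk ⟨h, hLj k⟩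
    -- every L_i neighbour of o k is a neighbour of o j
    have hsub : G.neighborSet (o k) ∩ {y | G.dist v0 y = i} ⊆
        G.neighborSet (o j) ∩ {y | G.dist v0 y = i} := by
      rintro u ⟨hu1, hu2⟩
      refine ⟨?_, hu2⟩
      by_contra huj
      exact hmc i ⟨x, u, o j, o k, hx, hu2, hLj j, hLj k, hxj,
        (SimpleGraph.mem_neighborSet _ _ _).mp hu1 |>.symm, hxk,
        fun h => huj h.symm⟩
    have hxmem : x ∈ G.neighborSet (o j) ∩ {y | G.dist v0 y = i} :=
      ⟨hxj.symm, hx⟩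
    have hxnmem : x ∉ G.neighborSet (o k) ∩ {y | G.dist v0 y = i} :=
      fun h => hxk ((SimpleGraph.mem_neighborSet _ _ _).mp h.1).symm
    have hss : G.neighborSet (o k) ∩ {y | G.dist v0 y = i} ⊂
        G.neighborSet (o j) ∩ {y | G.dist v0 y = i} :=
      ⟨hsub, fun h => hxnmem (h hxmem)⟩
    have hlt := Set.ncard_lt_ncard hss (Set.toFinite _)
    exact absurd (hmono k j hkj) (not_le.mpr hlt)
  -- N = o '' S
  have himg : N = o '' S := by
    ext v
    constructor
    · intro hv
      obtain ⟨j, hj⟩ := (hrange v).mp hv.2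
      exact ⟨j, by rwa [hS, Set.mem_setOf_eq, hj], hj⟩
    · rintro ⟨j, hj, rfl⟩
      exact hj
  rw [himg, Set.ncard_image_of_injective _ hinj, ← aux_initial_seg S hdc]
end

section
/- Let G be a connected graph with distance layers L_0, ..., L_z from v0 forming a multi-chain ordering, let H be a graph with no universal vertex, and suppose χ : V(G) → V(H) is a graph homomorphism. Then for every 1 ≤ i ≤ z there exists a vertex c of H such that no vertex of L_i is mapped to c by χ. -/
lemma stmt_12_prev {V : Type*} (G : SimpleGraph V) (hconn : G.Connected)
    (v0 x : V) (i : ℕ) (hi : 1 ≤ i) (hx : G.dist v0 x = i) :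
    ∃ u, G.Adj u x ∧ G.dist v0 u = i - 1 := by
  obtain ⟨p, hp⟩ := hconn.exists_walk_length_eq_dist v0 x
  rw [hx] at hp
  have hrev : p.reverse.length = i := by simp [hp]
  cases hq : p.reverse with
  | nil => rw [hq] at hrev; simp at hrev; omega
  | cons h q =>
    rename_i u
    refine ⟨u, h.symm, ?_⟩
    have hlen : q.length = i - 1 := by
      have := hrev; rw [hq] at this; simp at this; omega
    have h1 : G.dist v0 u ≤ i - 1 := by
      have := SimpleGraph.dist_le q.reverse
      simpa [hlen] using this
    have h2 : G.dist v0 x ≤ G.dist v0 u + G.dist u x := hconn.dist_triangle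
    have h3 : G.dist u x ≤ 1 := by
      rw [← SimpleGraph.dist_eq_one_iff_adj.mpr h.symm]
    omega

/-- If `G` is connected with a multi-chain ordering of distance layers from
`v0`, `H` (given by the loop-allowing adjacency relation `adjH`) has no
universal vertex, and `χ` is a homomorphism from `G` to `H`, then for every
`i ≥ 1` some vertex `c` of `H` is avoided by `χ` on the layer `L_i`. -/
theorem stmt_12 {V W : Type*} [Fintype V] (G : SimpleGraph V) (hconn : G.Connected)
    (v0 : V)
    (hmc : ∀ i : ℕ, ¬ ∃ u u' v v' : V,
      G.dist v0 u = i ∧ G.dist v0 u' = i ∧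
      G.dist v0 v = i + 1 ∧ G.dist v0 v' = i + 1 ∧
      G.Adj u v ∧ G.Adj u' v' ∧ ¬ G.Adj u v' ∧ ¬ G.Adj u' v)
    (adjH : W → W → Prop) (hsymm : ∀ a b, adjH a b → adjH b a)
    (hnouniv : ∀ c : W, ∃ c', ¬ adjH c c')
    (χ : V → W) (hhom : ∀ u v, G.Adj u v → adjH (χ u) (χ v)) :
    ∀ i : ℕ, 1 ≤ i → ∃ c : W, ∀ x : V, G.dist v0 x = i → χ x ≠ c := by
  intro i hi
  classical
  by_cases hL : ∃ x : V, G.dist v0 x = i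
  · obtain ⟨x0, hx0⟩ := hL
    -- previous layer set
    set S : Finset V := Finset.univ.filter (fun u => G.dist v0 u = i - 1) with hS
    -- neighbourhood in layer i
    set N : V → Finset V := fun u =>
      Finset.univ.filter (fun x => G.dist v0 x = i ∧ G.Adj u x) with hN
    have hSne : S.Nonempty := by
      obtain ⟨u, hu, hd⟩ := stmt_12_prev G hconn v0 x0 i hi hx0
      exact ⟨u, by simp [hS, hd]⟩
    obtain ⟨y, hyS, hymax⟩ := S.exists_max_image (fun u => (N u).card) hSne
    -- chain property: for u u' in S, N u ⊆ N u' or N u' ⊆ N u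
    have hchain : ∀ u ∈ S, ∀ u' ∈ S, N u ⊆ N u' ∨ N u' ⊆ N u := by
      intro u hu u' hu'
      by_contra hc
      push_neg at hc
      obtain ⟨v, hv, hv'⟩ := Finset.not_subset.mp hc.1
      obtain ⟨v', hv2, hv2'⟩ := Finset.not_subset.mp hc.2
      simp only [hN, Finset.mem_filter, Finset.mem_univ, true_and, not_and] at hv hv' hv2 hv2'
      simp only [hS, Finset.mem_filter, Finset.mem_univ, true_and] at hu hu'
      apply hmc (i - 1)
      exact ⟨u, u', v, v', hu, hu', by omega, by omega, hv.2,
        hv2.2, fun h => hv2' hv2.1 h, fun h => hv' hv.1 h⟩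
    -- y dominates all of layer i
    have hdom : ∀ x : V, G.dist v0 x = i → G.Adj y x := by
      intro x hx
      obtain ⟨u, hux, hud⟩ := stmt_12_prev G hconn v0 x i hi hx
      have huS : u ∈ S := by simp [hS, hud]
      have hxN : x ∈ N u := by simp [hN, hx, hux]
      rcases hchain u huS y hyS with h | h
      · have := h hxN
        simp only [hN, Finset.mem_filter] at this
        exact this.2.2
      · have hcard := hymax u huS
        have : N y = N u := Finset.eq_of_subset_of_card_le h hcard
        rw [← this] at hxN
        simp only [hN, Finset.mem_filter] at hxN
        exact hxN.2.2
    obtain ⟨c, hc⟩ := hnouniv (χ y)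
    refine ⟨c, fun x hx hxc => ?_⟩
    apply hc
    apply hsymm
    rw [← hxc]
    exact hsymm _ _ (hhom y x (hdom x hx))
  · push_neg at hL
    exact ⟨χ v0, fun x hx => absurd hx (hL x)⟩
end

section
/- Let G be a connected graph whose distance layers L_0, ..., L_z from v0 form a multi-chain ordering, with layers ordered by non-increasing backward degree, and let H have no universal vertex. Then G has a homomorphism to H obeying a list mapping P if and only if the configuration graph contains a directed path from S_0 to S_{z+1}. -/
/-- Let `G` be connected with distance layers from `v0` (enumerated by
`o i : Fin (m i) → V`) forming a multi-chain ordering, each layer ordered by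
non-increasing backward degree (so the neighbours of `x ∈ L_i` in `L_{i+1}` are
the first `d₊(x)` vertices of `L_{i+1}`), and let `H` (adjacency `adjH`, loops
allowed) have no universal vertex. Then `G` has a homomorphism to `H` obeying
the list mapping `P` iff the configuration graph has a directed path from
`S_0 = (0, 0)` to `S_{z+1} = (z+1, 0)`.  A configuration is a pair `(i, B)`
with `1 ≤ i ≤ z` and `B : V(H) → {0,…,|L_i|}` attaining both `0` and `|L_i|`;
an edge from `(i, B)` to `(i+1, B')` exists iff some homomorphism `χ` from the
subgraph induced on `L_i` to `H` obeys `P`, avoids `c` on the first `B c`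
vertices of `L_i`, and satisfies `B' c ≥ d₊(x)` whenever `c` is not adjacent
to `χ x` in `H`. -/
theorem stmt_18 {V W : Type*} [Fintype V] (G : SimpleGraph V) (hconn : G.Connected)
    (v0 : V) (adjH : W → W → Prop) (hsymm : ∀ a b, adjH a b → adjH b a)
    (hnouniv : ∀ c : W, ∃ c', ¬ adjH c c')
    (P : V → Set W)
    (z : ℕ) (hz : ∀ v : V, G.dist v0 v ≤ z) (hzne : ∃ v : V, G.dist v0 v = z)
    (m : ℕ → ℕ) (o : ∀ i : ℕ, Fin (m i) → V)
    (hinj : ∀ i, Function.Injective (o i))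
    (hrange : ∀ (i : ℕ) (v : V), G.dist v0 v = i ↔ ∃ j, o i j = v)
    (hmc : ∀ i : ℕ, ¬ ∃ u u' v v' : V,
      G.dist v0 u = i ∧ G.dist v0 u' = i ∧
      G.dist v0 v = i + 1 ∧ G.dist v0 v' = i + 1 ∧
      G.Adj u v ∧ G.Adj u' v' ∧ ¬ G.Adj u v' ∧ ¬ G.Adj u' v)
    (hmono : ∀ (i : ℕ) (j k : Fin (m (i + 1))), j ≤ k →
      (G.neighborSet (o (i + 1) k) ∩ {y | G.dist v0 y = i}).ncard ≤
      (G.neighborSet (o (i + 1) j) ∩ {y | G.dist v0 y = i}).ncard)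
    (hprefix : ∀ (i : ℕ) (j : Fin (m i)) (k : Fin (m (i + 1))),
      G.Adj (o i j) (o (i + 1) k) ↔
        (k : ℕ) < (G.neighborSet (o i j) ∩ {v | G.dist v0 v = i + 1}).ncard) :
    (∃ f : V → W, (∀ u v, G.Adj u v → adjH (f u) (f v)) ∧ ∀ x, f x ∈ P x) ↔
    Relation.ReflTransGen
      (fun S S' : ℕ × (W → ℕ) =>
        S'.1 = S.1 + 1 ∧
        ((S.1 = 0 ∧ S.2 = (fun _ => 0)) ∨
          (1 ≤ S.1 ∧ S.1 ≤ z ∧ (∀ c, S.2 c ≤ m S.1) ∧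
            (∃ c, S.2 c = 0) ∧ (∃ c, S.2 c = m S.1))) ∧
        ((S'.1 = z + 1 ∧ S'.2 = (fun _ => 0)) ∨
          (1 ≤ S'.1 ∧ S'.1 ≤ z ∧ (∀ c, S'.2 c ≤ m S'.1) ∧
            (∃ c, S'.2 c = 0) ∧ (∃ c, S'.2 c = m S'.1))) ∧
        (∃ χ : Fin (m S.1) → W,
          (∀ j j', G.Adj (o S.1 j) (o S.1 j') → adjH (χ j) (χ j')) ∧
          (∀ j, χ j ∈ P (o S.1 j)) ∧
          (∀ (c : W) (j : Fin (m S.1)), (j : ℕ) < S.2 c → χ j ≠ c) ∧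
          (∀ (j : Fin (m S.1)) (c : W), ¬ adjH (χ j) c →
            (G.neighborSet (o S.1 j) ∩ {v | G.dist v0 v = S.1 + 1}).ncard ≤
              S'.2 c)))
      (0, fun _ => 0) (z + 1, fun _ => 0) := by
  classical
  set R : (ℕ × (W → ℕ)) → (ℕ × (W → ℕ)) → Prop :=
    (fun S S' : ℕ × (W → ℕ) =>
        S'.1 = S.1 + 1 ∧
        ((S.1 = 0 ∧ S.2 = (fun _ => 0)) ∨
          (1 ≤ S.1 ∧ S.1 ≤ z ∧ (∀ c, S.2 c ≤ m S.1) ∧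
            (∃ c, S.2 c = 0) ∧ (∃ c, S.2 c = m S.1))) ∧
        ((S'.1 = z + 1 ∧ S'.2 = (fun _ => 0)) ∨
          (1 ≤ S'.1 ∧ S'.1 ≤ z ∧ (∀ c, S'.2 c ≤ m S'.1) ∧
            (∃ c, S'.2 c = 0) ∧ (∃ c, S'.2 c = m S'.1))) ∧
        (∃ χ : Fin (m S.1) → W,
          (∀ j j', G.Adj (o S.1 j) (o S.1 j') → adjH (χ j) (χ j')) ∧
          (∀ j, χ j ∈ P (o S.1 j)) ∧
          (∀ (c : W) (j : Fin (m S.1)), (j : ℕ) < S.2 c → χ j ≠ c) ∧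
          (∀ (j : Fin (m S.1)) (c : W), ¬ adjH (χ j) c →
            (G.neighborSet (o S.1 j) ∩ {v | G.dist v0 v = S.1 + 1}).ncard ≤
              S'.2 c))) with hR
  have hdist_o : ∀ (i : ℕ) (j : Fin (m i)), G.dist v0 (o i j) = i :=
    fun i j => (hrange i (o i j)).2 ⟨j, rfl⟩
  have hlayer : ∀ i : ℕ, {v : V | G.dist v0 v = i} = Set.range (o i) := by
    intro i; ext v
    simp only [Set.mem_setOf_eq, Set.mem_range]
    exact hrange i v
  have hncard_layer : ∀ i : ℕ, ({v : V | G.dist v0 v = i}).ncard = m i := by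
    intro i
    rw [hlayer i, Set.ncard_eq_toFinset_card', Set.toFinset_range,
      Finset.card_image_of_injective _ (hinj i), Finset.card_univ, Fintype.card_fin]
  have hdp_le : ∀ (i : ℕ) (j : Fin (m i)),
      (G.neighborSet (o i j) ∩ {v | G.dist v0 v = i + 1}).ncard ≤ m (i + 1) := by
    intro i j
    calc (G.neighborSet (o i j) ∩ {v | G.dist v0 v = i + 1}).ncard
        ≤ ({v : V | G.dist v0 v = i + 1}).ncard :=
          Set.ncard_le_ncard Set.inter_subset_right (Set.toFinite _)
      _ = m (i + 1) := hncard_layer _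
  have hdpz : ∀ j : Fin (m z),
      (G.neighborSet (o z j) ∩ {v | G.dist v0 v = z + 1}).ncard = 0 := by
    intro j
    have hempty : (G.neighborSet (o z j) ∩ {v : V | G.dist v0 v = z + 1}) = ∅ := by
      ext v
      simp only [Set.mem_inter_iff, Set.mem_setOf_eq, Set.mem_empty_iff_false, iff_false,
        not_and]
      intro _ hv
      have := hz v
      omega
    rw [hempty, Set.ncard_empty]
  have htri : ∀ u v : V, G.Adj u v → G.dist v0 v ≤ G.dist v0 u + 1 := by
    intro u v h
    have h1 := hconn.dist_triangle (u := v0) (v := u) (w := v)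
    have h2 : G.dist u v = 1 := SimpleGraph.dist_eq_one_iff_adj.2 h
    omega
  have hprev : ∀ (n : ℕ) (v : V), G.dist v0 v = n + 1 →
      ∃ u : V, G.Adj u v ∧ G.dist v0 u = n := by
    intro n v hv
    obtain ⟨p, hp⟩ := hconn.exists_walk_length_eq_dist v0 v
    have hlen : p.length = n + 1 := by rw [hp, hv]
    have hadj : G.Adj (p.getVert n) v := by
      have h2 := p.adj_getVert_succ (i := n) (by omega)
      rw [show n + 1 = p.length by omega, p.getVert_length] at h2
      exact h2
    have hub : ∀ k : ℕ, k ≤ p.length → G.dist v0 (p.getVert k) ≤ k := by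
      intro k
      induction k with
      | zero =>
        intro _
        simp [SimpleGraph.Walk.getVert_zero]
      | succ k ih =>
        intro hk
        have h1 := ih (by omega)
        have h2 := p.adj_getVert_succ (i := k) (by omega)
        have h3 := htri _ _ h2
        omega
    have h1 := hub n (by omega)
    have h3 := htri (p.getVert n) v hadj
    exact ⟨p.getVert n, hadj, by omega⟩
  have hexlayer : ∀ i : ℕ, i ≤ z → ∃ v : V, G.dist v0 v = i := by
    have haux : ∀ k : ℕ, ∃ v : V, G.dist v0 v = z - k := by
      intro k
      induction k with
      | zero => simpa using hzne
      | succ k ih =>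
        obtain ⟨v, hv⟩ := ih
        rcases Nat.lt_or_ge k z with h | h
        · have he : z - k = (z - (k + 1)) + 1 := by omega
          rw [he] at hv
          obtain ⟨u, _, hu⟩ := hprev _ _ hv
          exact ⟨u, hu⟩
        · refine ⟨v0, ?_⟩
          rw [SimpleGraph.dist_self]
          omega
    intro i hi
    obtain ⟨v, hv⟩ := haux (z - i)
    exact ⟨v, by rwa [show z - (z - i) = i by omega] at hv⟩
  have hm : ∀ i : ℕ, i ≤ z → 0 < m i := by
    intro i hi
    obtain ⟨v, hv⟩ := hexlayer i hi
    obtain ⟨j, _⟩ := (hrange i v).1 hv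
    exact j.pos
  constructor
  · rintro ⟨f, hf, hfP⟩
    set Bf : ℕ → W → ℕ := fun i c =>
      if i = 0 then 0 else
        ((Finset.univ : Finset (Fin (m (i - 1)))).filter
          (fun j => ¬ adjH (f (o (i - 1) j)) c)).sup
          (fun j => (G.neighborSet (o (i - 1) j) ∩ {v | G.dist v0 v = i}).ncard)
      with hBfdef
    have hBf0 : Bf 0 = fun _ => 0 := by
      funext c; simp [hBfdef]
    have hBfs : ∀ (i : ℕ) (c : W), Bf (i + 1) c =
        ((Finset.univ : Finset (Fin (m i))).filter
          (fun j => ¬ adjH (f (o i j)) c)).sup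
          (fun j => (G.neighborSet (o i j) ∩ {v | G.dist v0 v = i + 1}).ncard) := by
      intro i c
      simp [hBfdef]
    have hBle : ∀ (i : ℕ) (c : W), Bf (i + 1) c ≤ m (i + 1) := by
      intro i c
      rw [hBfs]
      exact Finset.sup_le fun j _ => hdp_le i j
    have hBz : Bf (z + 1) = fun _ => 0 := by
      funext c
      show Bf (z + 1) c = 0
      rw [hBfs]
      exact Nat.le_zero.1 (Finset.sup_le fun j _ => le_of_eq (hdpz j))
    have hex0 : ∀ i : ℕ, i + 1 ≤ z → ∃ c, Bf (i + 1) c = 0 := by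
      intro i hi
      refine ⟨f (o (i + 1) ⟨0, hm (i + 1) hi⟩), ?_⟩
      rw [hBfs]
      refine Nat.le_zero.1 (Finset.sup_le ?_)
      intro j hj
      rw [Finset.mem_filter] at hj
      by_contra hlt
      push_neg at hlt
      have hadj := (hprefix i j ⟨0, hm (i + 1) hi⟩).2 (by simpa using hlt)
      exact hj.2 (hf _ _ hadj)
    have hexm : ∀ i : ℕ, i + 1 ≤ z → ∃ c, Bf (i + 1) c = m (i + 1) := by
      intro i hi
      have hmpos := hm (i + 1) hi
      set k : Fin (m (i + 1)) := ⟨m (i + 1) - 1, by omega⟩ with hk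
      have hdk : G.dist v0 (o (i + 1) k) = i + 1 := hdist_o _ _
      obtain ⟨u, hadj, hdu⟩ := hprev i (o (i + 1) k) hdk
      obtain ⟨j0, hj0⟩ := (hrange i u).1 hdu
      rw [← hj0] at hadj
      have hlt := (hprefix i j0 k).1 hadj
      have hkval : (k : ℕ) = m (i + 1) - 1 := rfl
      have hge : m (i + 1) ≤ (G.neighborSet (o i j0) ∩ {v | G.dist v0 v = i + 1}).ncard := by
        omega
      obtain ⟨c, hc⟩ := hnouniv (f (o i j0))
      refine ⟨c, le_antisymm (hBle i c) ?_⟩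
      rw [hBfs]
      exact le_trans hge (Finset.le_sup
        (f := fun j => (G.neighborSet (o i j) ∩ {v | G.dist v0 v = i + 1}).ncard)
        (Finset.mem_filter.2 ⟨Finset.mem_univ j0, hc⟩))
    have hstep : ∀ i : ℕ, i ≤ z → R (i, Bf i) (i + 1, Bf (i + 1)) := by
      intro i hi
      rw [hR]
      refine ⟨rfl, ?_, ?_, ⟨fun j => f (o i j), ?_, ?_, ?_, ?_⟩⟩
      · rcases Nat.eq_zero_or_pos i with h0 | hpos
        · subst h0
          exact Or.inl ⟨rfl, hBf0⟩
        · obtain ⟨i', rfl⟩ := Nat.exists_eq_succ_of_ne_zero (by omega : i ≠ 0)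
          exact Or.inr ⟨by omega, hi, hBle i', hex0 i' hi, hexm i' hi⟩
      · rcases Nat.lt_or_ge i z with hlt | hge
        · exact Or.inr ⟨by omega, by omega, hBle i, hex0 i (by omega), hexm i (by omega)⟩
        · have hiz : i = z := by omega
          subst hiz
          exact Or.inl ⟨rfl, hBz⟩
      · intro j j' hadj
        exact hf _ _ hadj
      · intro j
        exact hfP _
      · intro c j hj
        rcases Nat.eq_zero_or_pos i with h0 | hpos
        · subst h0
          exact absurd hj (Nat.not_lt_zero _)
        · obtain ⟨i', rfl⟩ := Nat.exists_eq_succ_of_ne_zero (by omega : i ≠ 0)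
          have hj' : (j : ℕ) < Bf (i' + 1) c := hj
          rw [hBfs, Finset.lt_sup_iff] at hj'
          obtain ⟨j', hj'mem, hjlt⟩ := hj'
          rw [Finset.mem_filter] at hj'mem
          have hadj := (hprefix i' j' j).2 hjlt
          intro heq
          have heq' : f (o (i' + 1) j) = c := heq
          have h2 := hf _ _ hadj
          rw [heq'] at h2
          exact hj'mem.2 h2
      · intro j c hc
        show _ ≤ Bf (i + 1) c
        rw [hBfs]
        exact Finset.le_sup
          (f := fun j' => (G.neighborSet (o i j') ∩ {v | G.dist v0 v = i + 1}).ncard)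
          (Finset.mem_filter.2 ⟨Finset.mem_univ j, hc⟩)
    have hchain : ∀ k : ℕ, k ≤ z + 1 →
        Relation.ReflTransGen R (0, Bf 0) (k, Bf k) := by
      intro k
      induction k with
      | zero => intro _; exact Relation.ReflTransGen.refl
      | succ k ih =>
        intro hk
        exact (ih (by omega)).tail (hstep k (by omega))
    have hfin := hchain (z + 1) le_rfl
    rwa [hBf0, hBz] at hfin
  · intro hpath
    have hm0 : 0 < m 0 := hm 0 (Nat.zero_le z)
    have hW : Nonempty W := by
      rcases Relation.ReflTransGen.cases_head hpath with heq | ⟨T, hst, _⟩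
      · exact absurd (congrArg Prod.fst heq) (by simp)
      · rw [hR] at hst
        obtain ⟨_, _, _, χ, _⟩ := hst
        exact ⟨χ ⟨0, hm0⟩⟩
    obtain ⟨w0⟩ := hW
    have key : ∀ S : ℕ × (W → ℕ), Relation.ReflTransGen R S (z + 1, fun _ => 0) →
        ∃ g : V → W,
          (∀ u v : V, S.1 ≤ G.dist v0 u → S.1 ≤ G.dist v0 v → G.Adj u v →
            adjH (g u) (g v)) ∧
          (∀ v : V, S.1 ≤ G.dist v0 v → g v ∈ P v) ∧
          (∀ (j : Fin (m S.1)) (c : W), (j : ℕ) < S.2 c → g (o S.1 j) ≠ c) := by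
      intro S hS
      induction hS using Relation.ReflTransGen.head_induction_on with
      | refl =>
        refine ⟨fun _ => w0, ?_, ?_, ?_⟩
        · intro u v hu hv _
          have hu' : z + 1 ≤ G.dist v0 u := hu
          have := hz u
          omega
        · intro v hv
          have hv' : z + 1 ≤ G.dist v0 v := hv
          have := hz v
          omega
        · intro j c hc
          have hc' : (j : ℕ) < 0 := hc
          omega
      | @head S T hst htail ih =>
        obtain ⟨i, B⟩ := S
        obtain ⟨i2, B2⟩ := T
        rw [hR] at hst
        obtain ⟨h1, hv1, hv2, χ, hχadj, hχP, hχav, hχfwd⟩ := hst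
        have h1' : i2 = i + 1 := h1
        subst h1'
        obtain ⟨g, hga, hgP, hgav⟩ := ih
        set g' : V → W :=
          fun v => if h : G.dist v0 v = i then χ ((hrange i v).1 h).choose else g v
          with hg'def
        have hg'o : ∀ j : Fin (m i), g' (o i j) = χ j := by
          intro j
          have hd : G.dist v0 (o i j) = i := hdist_o i j
          have hspec := ((hrange i (o i j)).1 hd).choose_spec
          rw [hg'def]
          simp only [dif_pos hd]
          exact congrArg χ (hinj i hspec)
        have hg'ne : ∀ v : V, G.dist v0 v ≠ i → g' v = g v := by
          intro v hv
          rw [hg'def]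
          simp only [dif_neg hv]
        have hmix : ∀ (ju : Fin (m i)) (kv : Fin (m (i + 1))),
            G.Adj (o i ju) (o (i + 1) kv) → adjH (χ ju) (g (o (i + 1) kv)) := by
          intro ju kv hadj
          by_contra hc
          have h1 := hχfwd ju (g (o (i + 1) kv)) hc
          have h2 := (hprefix i ju kv).1 hadj
          exact hgav kv (g (o (i + 1) kv)) (lt_of_lt_of_le h2 h1) rfl
        refine ⟨g', ?_, ?_, ?_⟩
        · intro u v hu hv huv
          have htr1 := htri u v huv
          have htr2 := htri v u huv.symm
          have hu' : i ≤ G.dist v0 u := hu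
          have hv' : i ≤ G.dist v0 v := hv
          rcases eq_or_lt_of_le hu' with hdu | hdu <;>
            rcases eq_or_lt_of_le hv' with hdv | hdv
          · obtain ⟨ju, hju⟩ := (hrange i u).1 hdu.symm
            obtain ⟨jv, hjv⟩ := (hrange i v).1 hdv.symm
            rw [← hju, ← hjv] at huv ⊢
            rw [hg'o ju, hg'o jv]
            exact hχadj ju jv huv
          · have hdv1 : G.dist v0 v = i + 1 := by omega
            obtain ⟨ju, hju⟩ := (hrange i u).1 hdu.symm
            obtain ⟨kv, hkv⟩ := (hrange (i + 1) v).1 hdv1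
            rw [← hju, ← hkv] at huv ⊢
            rw [hg'o ju, hg'ne (o (i + 1) kv) (by rw [hdist_o]; omega)]
            exact hmix ju kv huv
          · have hdu1 : G.dist v0 u = i + 1 := by omega
            obtain ⟨ku, hku⟩ := (hrange (i + 1) u).1 hdu1
            obtain ⟨jv, hjv⟩ := (hrange i v).1 hdv.symm
            rw [← hku, ← hjv] at huv ⊢
            rw [hg'o jv, hg'ne (o (i + 1) ku) (by rw [hdist_o]; omega)]
            exact hsymm _ _ (hmix jv ku huv.symm)
          · rw [hg'ne u (by omega), hg'ne v (by omega)]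
            exact hga u v (by omega) (by omega) huv
        · intro v hv
          by_cases hd : G.dist v0 v = i
          · obtain ⟨j, hj⟩ := (hrange i v).1 hd
            rw [← hj, hg'o j]
            exact hχP j
          · rw [hg'ne v hd]
            have hv' : i ≤ G.dist v0 v := hv
            exact hgP v (by omega)
        · intro j c hc
          rw [hg'o j]
          exact hχav c j hc
    obtain ⟨g, hga, hgP, _⟩ := key (0, fun _ => 0) hpath
    exact ⟨g, fun u v h => hga u v (Nat.zero_le _) (Nat.zero_le _) h,
      fun v => hgP v (Nat.zero_le _)⟩
end

section
/- With configurations S = (i, B) and S' = (i+1, B') as in the configuration graph construction, there is an edge from S to S' if and only if the subgraph G_i of G induced by layer L_i has a homomorphism to H obeying the derived list mapping P' defined by P'(x_j) = { c ∈ P(x_j) : B(c) < j, and for all c' ∈ V(H), d_+(x_j) ≤ B'(c') or cc' ∈ E(H) }, where x_j is the j-th vertex of L_i. -/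
/-- With configurations `S = (i, B)` and `S' = (i+1, B')`, there is an edge
from `S` to `S'` in the configuration graph (i.e. some homomorphism `χ` from
the subgraph induced on `L_i` to `H` obeys `P`, avoids `c` on the first `B c`
vertices, and satisfies `B' c ≥ d₊(x)` whenever `c` is not adjacent to `χ x`)
iff the subgraph induced on `L_i` has a homomorphism to `H` obeying the derived
list mapping `P'(x_j) = {c ∈ P(x_j) : B c < j, ∀ c', d₊(x_j) ≤ B' c' or
cc' ∈ E(H)}` (indices of `L_i` here `0`-based, so `B c < j` reads
`B c ≤ j`). -/
theorem stmt_19 {V W : Type*} [Fintype V] (G : SimpleGraph V) (hconn : G.Connected)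
    (v0 : V) (adjH : W → W → Prop) (P : V → Set W)
    (m : ℕ → ℕ) (o : ∀ i : ℕ, Fin (m i) → V)
    (hinj : ∀ i, Function.Injective (o i))
    (hrange : ∀ (i : ℕ) (v : V), G.dist v0 v = i ↔ ∃ j, o i j = v)
    (hprefix : ∀ (i : ℕ) (j : Fin (m i)) (k : Fin (m (i + 1))),
      G.Adj (o i j) (o (i + 1) k) ↔
        (k : ℕ) < (G.neighborSet (o i j) ∩ {v | G.dist v0 v = i + 1}).ncard)
    (i : ℕ) (B B' : W → ℕ) :
    (∃ χ : Fin (m i) → W,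
      (∀ j j', G.Adj (o i j) (o i j') → adjH (χ j) (χ j')) ∧
      (∀ j, χ j ∈ P (o i j)) ∧
      (∀ (c : W) (j : Fin (m i)), (j : ℕ) < B c → χ j ≠ c) ∧
      (∀ (j : Fin (m i)) (c : W), ¬ adjH (χ j) c →
        (G.neighborSet (o i j) ∩ {v | G.dist v0 v = i + 1}).ncard ≤ B' c)) ↔
    (∃ χ : Fin (m i) → W,
      (∀ j j', G.Adj (o i j) (o i j') → adjH (χ j) (χ j')) ∧
      (∀ j : Fin (m i), χ j ∈
        {c ∈ P (o i j) | B c ≤ (j : ℕ) ∧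
          ∀ c' : W,
            (G.neighborSet (o i j) ∩ {v | G.dist v0 v = i + 1}).ncard ≤ B' c' ∨
            adjH c c'})) := by
  constructor
  · rintro ⟨χ, h1, h2, h3, h4⟩
    refine ⟨χ, h1, fun j => ⟨h2 j, ?_, fun c' => ?_⟩⟩
    · by_contra h
      exact h3 (χ j) j (lt_of_not_ge h) rfl
    · by_cases hadj : adjH (χ j) c'
      · exact Or.inr hadj
      · exact Or.inl (h4 j c' hadj)
  · rintro ⟨χ, h1, h2⟩
    refine ⟨χ, h1, fun j => (h2 j).1, fun c j hj hc => ?_, fun j c hc => ?_⟩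
    · exact absurd ((h2 j).2.1) (by rw [hc]; omega)
    · rcases (h2 j).2.2 c with h | h
      · exact h
      · exact absurd h hc
end
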